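/- Let 0 → A → E →^β B → 0 be an abelian extension of an associative conformal algebra B by a B-bimodule A, with associated 2-cocycle χ and Wells map W(∂_A, ∂_B) = [Θ(∂_A,∂_B)(χ)]. Then there is an exact sequence of vector spaces 0 → Z¹(B,A) → Der_A(E) →^{κ̄} g(A,B) →^W H²(B,A), where κ̄(∂_E) = (∂_E|_A, β∘∂_E∘γ); in particular a pair (∂_A, ∂_B) ∈ Der(A)×Der(B) is extensible to a derivation of E if and only if (∂_A,∂_B) ∈ g(A,B) and W(∂_A,∂_B) = 0. -/

import Mathlib

structure AssocConformalAlg (k : Type*) [Field k] (A : Type*) [AddCommGroup A] [Module k A] where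
  D : A →ₗ[k] A
  mul : k → A →ₗ[k] A →ₗ[k] A
  conf_left : ∀ (l : k) (a b : A), mul l (D a) b = -(l • mul l a b)
  conf_right : ∀ (l : k) (a b : A), mul l a (D b) = D (mul l a b) + l • mul l a b
  assoc : ∀ (l m : k) (a b c : A), mul (l + m) (mul l a b) c = mul l a (mul m b c)

structure ConfBimodule {k : Type*} [Field k] {A : Type*} [AddCommGroup A] [Module k A]
    (S : AssocConformalAlg k A) (M : Type*) [AddCommGroup M] [Module k M] where
  DM : M →ₗ[k] M
  lact : k → A →ₗ[k] M →ₗ[k] M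
  ract : k → M →ₗ[k] A →ₗ[k] M
  lact_D : ∀ (l : k) (a : A) (v : M), lact l (S.D a) v = -(l • lact l a v)
  lact_DM : ∀ (l : k) (a : A) (v : M), lact l a (DM v) = DM (lact l a v) + l • lact l a v
  lact_mul : ∀ (l m : k) (a b : A) (v : M),
      lact (l + m) (S.mul l a b) v = lact l a (lact m b v)
  ract_DM : ∀ (l : k) (v : M) (a : A), ract l (DM v) a = -(l • ract l v a)
  ract_D : ∀ (l : k) (v : M) (a : A), ract l v (S.D a) = DM (ract l v a) + l • ract l v a
  ract_mul : ∀ (l m : k) (v : M) (a b : A),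
      ract (l + m) (ract l v a) b = ract l v (S.mul m a b)
  compat : ∀ (l m : k) (a : A) (v : M) (b : A),
      ract (l + m) (lact l a v) b = lact l a (ract m v b)

/-- A derivation of an associative conformal algebra. -/
def IsConfDer {k : Type*} [Field k] {E : Type*} [AddCommGroup E] [Module k E]
    (S : AssocConformalAlg k E) (d : E →ₗ[k] E) : Prop :=
  (∀ x, d (S.D x) = S.D (d x)) ∧
  ∀ (l : k) (x y : E), d (S.mul l x y) = S.mul l (d x) y + S.mul l x (d y)

/-!
Realise the extension as `E = A × B` with `β` the second projection and `γ = inr`. A linear map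
of `E` preserving `A` is then an upper triangular block map `(a, b) ↦ (∂_A a + f b, ∂_B b)`,
and expanding the derivation rule on the product of `E` componentwise shows that it is a
derivation exactly when `∂_B ∈ Der(B)`, the pair `(∂_A, ∂_B)` is compatible with both actions
(so lies in `g(A,B)`), and `Θ(∂_A, ∂_B)(χ) = d₁ f`. The Wells class `[Θ(∂_A, ∂_B)(χ)]` thus
vanishes precisely when the pair extends, and the derivations with `∂_A = 0`, `∂_B = 0` are
exactly the maps `(a, b) ↦ (f b, 0)` with `f ∈ Z¹(B, A)`.
-/

section AbelianExtension

variable {k : Type*} [Field k] {A B : Type*} [AddCommGroup A] [Module k A]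
  [AddCommGroup B] [Module k B]

def blockTriangular (dA : A →ₗ[k] A) (f : B →ₗ[k] A) (dB : B →ₗ[k] B) :
    A × B →ₗ[k] A × B :=
  (dA ∘ₗ LinearMap.fst k A B + f ∘ₗ LinearMap.snd k A B).prod (dB ∘ₗ LinearMap.snd k A B)

@[simp]
lemma blockTriangular_apply (dA : A →ₗ[k] A) (f : B →ₗ[k] A) (dB : B →ₗ[k] B) (p : A × B) :
    blockTriangular dA f dB p = (dA p.1 + f p.2, dB p.2) :=
  rfl

lemma eq_blockTriangular {dE : A × B →ₗ[k] A × B} {dA : A →ₗ[k] A} {dB : B →ₗ[k] B}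
    (hA : ∀ a, dE (a, 0) = (dA a, 0)) (hB : ∀ b, (dE (0, b)).2 = dB b) :
    dE = blockTriangular dA (LinearMap.fst k A B ∘ₗ dE ∘ₗ LinearMap.inr k A B) dB := by
  refine LinearMap.prod_ext ?_ ?_
  · ext a <;> simp [hA]
  · ext b <;> simp [hB]

variable {SB : AssocConformalAlg k B} {Mb : ConfBimodule SB A}
  {chi : k → B →ₗ[k] B →ₗ[k] A} {S : AssocConformalAlg k (A × B)}

lemma blockTriangular_commute_D_iff (hSD : ∀ p : A × B, S.D p = (Mb.DM p.1, SB.D p.2))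
    (dA : A →ₗ[k] A) (f : B →ₗ[k] A) (dB : B →ₗ[k] B) :
    (∀ p, blockTriangular dA f dB (S.D p) = S.D (blockTriangular dA f dB p)) ↔
      (∀ a, dA (Mb.DM a) = Mb.DM (dA a)) ∧ (∀ b, f (SB.D b) = Mb.DM (f b)) ∧
        ∀ b, dB (SB.D b) = SB.D (dB b) := by
  simp only [hSD, blockTriangular_apply, map_add, Prod.ext_iff]
  constructor
  · intro h
    refine ⟨fun a => ?_, fun b => ?_, fun b => (h (0, b)).2⟩
    · simpa using (h (a, 0)).1
    · simpa using (h (0, b)).1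
  · rintro ⟨hdA, hf, hdB⟩ p
    simp [hdA, hf, hdB]

lemma blockTriangular_leibniz_iff (hSm : ∀ (l : k) (p q : A × B),
      S.mul l p q = (Mb.ract l p.1 q.2 + Mb.lact l p.2 q.1 + chi l p.2 q.2, SB.mul l p.2 q.2))
    (dA : A →ₗ[k] A) (f : B →ₗ[k] A) (dB : B →ₗ[k] B) :
    (∀ (l : k) (p q : A × B), blockTriangular dA f dB (S.mul l p q)
        = S.mul l (blockTriangular dA f dB p) q + S.mul l p (blockTriangular dA f dB q)) ↔
      (∀ (l : k) (b1 b2 : B),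
          dB (SB.mul l b1 b2) = SB.mul l (dB b1) b2 + SB.mul l b1 (dB b2)) ∧
      (∀ (l : k) (b : B) (a : A),
          dA (Mb.lact l b a) = Mb.lact l b (dA a) + Mb.lact l (dB b) a) ∧
      (∀ (l : k) (a : A) (b : B),
          dA (Mb.ract l a b) = Mb.ract l a (dB b) + Mb.ract l (dA a) b) ∧
      ∀ (l : k) (b1 b2 : B),
        dA (chi l b1 b2) - chi l (dB b1) b2 - chi l b1 (dB b2)
          = Mb.lact l b1 (f b2) - f (SB.mul l b1 b2) + Mb.ract l (f b1) b2 := by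
  simp only [hSm, blockTriangular_apply, Prod.ext_iff, Prod.fst_add, Prod.snd_add, map_add,
    LinearMap.add_apply]
  constructor
  · intro h
    refine ⟨fun l b1 b2 => (h l (0, b1) (0, b2)).2, fun l b a => ?_, fun l a b => ?_,
      fun l b1 b2 => ?_⟩
    · have h1 := (h l (0, b) (a, 0)).1
      simp only [map_zero, add_zero, zero_add] at h1
      rw [h1, add_comm]
    · have h1 := (h l (a, 0) (0, b)).1
      simp only [map_zero, LinearMap.zero_apply, add_zero] at h1
      rw [h1, add_comm]
    · have h1 := (h l (0, b1) (0, b2)).1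
      simp only [map_zero, LinearMap.zero_apply, add_zero, zero_add] at h1
      rw [eq_sub_iff_add_eq.mpr h1]
      abel
  · rintro ⟨hdB, hlact, hract, hcoc⟩ l ⟨a1, b1⟩ ⟨a2, b2⟩
    refine ⟨?_, hdB l b1 b2⟩
    have hchi : dA (chi l b1 b2) = Mb.lact l b1 (f b2) - f (SB.mul l b1 b2)
        + Mb.ract l (f b1) b2 + chi l (dB b1) b2 + chi l b1 (dB b2) := by
      rw [← hcoc]
      abel
    rw [hlact, hract, hchi]
    abel

lemma isConfDer_blockTriangular_iff (hSD : ∀ p : A × B, S.D p = (Mb.DM p.1, SB.D p.2))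
    (hSm : ∀ (l : k) (p q : A × B),
      S.mul l p q = (Mb.ract l p.1 q.2 + Mb.lact l p.2 q.1 + chi l p.2 q.2, SB.mul l p.2 q.2))
    (dA : A →ₗ[k] A) (f : B →ₗ[k] A) (dB : B →ₗ[k] B) :
    IsConfDer S (blockTriangular dA f dB) ↔
      ((∀ a, dA (Mb.DM a) = Mb.DM (dA a)) ∧ (∀ b, f (SB.D b) = Mb.DM (f b)) ∧
        ∀ b, dB (SB.D b) = SB.D (dB b)) ∧
      (∀ (l : k) (b1 b2 : B),
          dB (SB.mul l b1 b2) = SB.mul l (dB b1) b2 + SB.mul l b1 (dB b2)) ∧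
      (∀ (l : k) (b : B) (a : A),
          dA (Mb.lact l b a) = Mb.lact l b (dA a) + Mb.lact l (dB b) a) ∧
      (∀ (l : k) (a : A) (b : B),
          dA (Mb.ract l a b) = Mb.ract l a (dB b) + Mb.ract l (dA a) b) ∧
      ∀ (l : k) (b1 b2 : B),
        dA (chi l b1 b2) - chi l (dB b1) b2 - chi l b1 (dB b2)
          = Mb.lact l b1 (f b2) - f (SB.mul l b1 b2) + Mb.ract l (f b1) b2 :=
  and_congr (blockTriangular_commute_D_iff hSD dA f dB) (blockTriangular_leibniz_iff hSm dA f dB)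

lemma isConfDer_blockTriangular_zero_iff (hSD : ∀ p : A × B, S.D p = (Mb.DM p.1, SB.D p.2))
    (hSm : ∀ (l : k) (p q : A × B),
      S.mul l p q = (Mb.ract l p.1 q.2 + Mb.lact l p.2 q.1 + chi l p.2 q.2, SB.mul l p.2 q.2))
    (f : B →ₗ[k] A) :
    IsConfDer S (blockTriangular 0 f 0) ↔
      (∀ b, f (SB.D b) = Mb.DM (f b)) ∧
        ∀ (l : k) (b1 b2 : B),
          f (SB.mul l b1 b2) = Mb.lact l b1 (f b2) + Mb.ract l (f b1) b2 := by
  rw [isConfDer_blockTriangular_iff hSD hSm]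
  simp only [LinearMap.zero_apply, map_zero, sub_zero, add_zero, true_and, and_true,
    implies_true]
  refine and_congr_right fun _ => forall₃_congr fun l b1 b2 => ?_
  constructor <;> intro h
  · rw [← add_zero (f _), h]
    abel
  · rw [h]
    abel

end AbelianExtension

theorem stmt_19_general (k : Type*) [Field k]
    (A B : Type*) [AddCommGroup A] [Module k A] [AddCommGroup B] [Module k B]
    (SB : AssocConformalAlg k B) (Mb : ConfBimodule SB A)
    (chi : k → B →ₗ[k] B →ₗ[k] A)
    (S : AssocConformalAlg k (A × B))
    (hSD : ∀ p : A × B, S.D p = (Mb.DM p.1, SB.D p.2))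
    (hSm : ∀ (l : k) (p q : A × B),
      S.mul l p q
        = (Mb.ract l p.1 q.2 + Mb.lact l p.2 q.1 + chi l p.2 q.2, SB.mul l p.2 q.2)) :
    (∀ f : B →ₗ[k] A, (∀ b : B, ((f b, (0 : B)) : A × B) = 0) → f = 0) ∧
    (∀ dE : (A × B) →ₗ[k] (A × B), IsConfDer S dE →
      (∀ a : A, (dE (a, (0 : B))).2 = 0) →
      (((∀ a : A, dE (a, (0 : B)) = 0) ∧ ∀ b : B, (dE ((0 : A), b)).2 = 0) ↔
        ∃ f : B →ₗ[k] A, (∀ b, f (SB.D b) = Mb.DM (f b)) ∧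
          (∀ (l : k) (b1 b2 : B),
            f (SB.mul l b1 b2) = Mb.lact l b1 (f b2) + Mb.ract l (f b1) b2) ∧
          ∀ p : A × B, dE p = (f p.2, 0))) ∧
    (∀ (dA : A →ₗ[k] A) (dB : B →ₗ[k] B),
      (∀ a, dA (Mb.DM a) = Mb.DM (dA a)) →
      ((∀ b, dB (SB.D b) = SB.D (dB b)) ∧
       ∀ (l : k) (b1 b2 : B),
         dB (SB.mul l b1 b2) = SB.mul l (dB b1) b2 + SB.mul l b1 (dB b2)) →
      ((∃ dE : (A × B) →ₗ[k] (A × B), IsConfDer S dE ∧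
          (∀ a : A, dE (a, (0 : B))= ((dA a : A), (0 : B))) ∧
          ∀ b : B, (dE ((0 : A), b)).2 = dB b) ↔
        ((∀ (l : k) (b : B) (a : A),
            dA (Mb.lact l b a) = Mb.lact l b (dA a) + Mb.lact l (dB b) a) ∧
         (∀ (l : k) (a : A) (b : B),
            dA (Mb.ract l a b) = Mb.ract l a (dB b) + Mb.ract l (dA a) b) ∧
         ∃ f : B →ₗ[k] A, (∀ b, f (SB.D b) = Mb.DM (f b)) ∧
           ∀ (l : k) (b1 b2 : B),
             dA (chi l b1 b2) - chi l (dB b1) b2 - chi l b1 (dB b2)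
               = Mb.lact l b1 (f b2) - f (SB.mul l b1 b2) + Mb.ract l (f b1) b2))) := by
  refine ⟨fun f hf => LinearMap.ext fun b => congrArg Prod.fst (hf b), ?_, ?_⟩
  · intro dE hdE _
    constructor
    · rintro ⟨hA, hB⟩
      have hdE_eq := eq_blockTriangular (dA := 0) (dB := 0) (fun a => hA a) hB
      rw [hdE_eq, isConfDer_blockTriangular_zero_iff hSD hSm] at hdE
      exact ⟨_, hdE.1, hdE.2, fun p => by rw [hdE_eq]; simp⟩
    · rintro ⟨f, -, -, hf⟩
      exact ⟨fun a => by simp [hf], fun b => by simp [hf]⟩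
  · intro dA dB hdA hdB
    constructor
    · rintro ⟨dE, hdE, hA, hB⟩
      rw [eq_blockTriangular hA hB, isConfDer_blockTriangular_iff hSD hSm] at hdE
      obtain ⟨⟨-, hf, -⟩, -, hlact, hract, hcoc⟩ := hdE
      exact ⟨hlact, hract, _, hf, hcoc⟩
    · rintro ⟨hlact, hract, f, hf, hcoc⟩
      refine ⟨blockTriangular dA f dB, ?_, fun a => by simp, fun b => by simp⟩
      exact (isConfDer_blockTriangular_iff hSD hSm dA f dB).mpr
        ⟨⟨hdA, hf, hdB.1⟩, hdB.2, hlact, hract, hcoc⟩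

/-- The exact Wells-type sequence for derivations of an abelian extension:
`0 → Z¹(B,A) → Der_A(E) →^{κ̄} g(A,B) →^{W} H²(B,A)`, and in particular a pair
`(∂_A, ∂_B)` is extensible iff it lies in `g(A,B)` and its Wells class vanishes. -/
theorem stmt_19 (k : Type*) [Field k] [IsAlgClosed k] [CharZero k]
    (A B : Type*) [AddCommGroup A] [Module k A] [AddCommGroup B] [Module k B]
    (SB : AssocConformalAlg k B) (Mb : ConfBimodule SB A)
    (chi : k → B →ₗ[k] B →ₗ[k] A)
    (hchiD1 : ∀ l b1 b2, chi l (SB.D b1) b2 = -(l • chi l b1 b2))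
    (hchiD2 : ∀ l b1 b2, chi l b1 (SB.D b2) = Mb.DM (chi l b1 b2) + l • chi l b1 b2)
    (hcoc : ∀ (l m : k) (b1 b2 b3 : B),
      Mb.lact l b1 (chi m b2 b3) - chi (l + m) (SB.mul l b1 b2) b3
        + chi l b1 (SB.mul m b2 b3) - Mb.ract (l + m) (chi l b1 b2) b3 = 0)
    (S : AssocConformalAlg k (A × B))
    (hSD : ∀ p : A × B, S.D p = (Mb.DM p.1, SB.D p.2))
    (hSm : ∀ (l : k) (p q : A × B),
      S.mul l p q
        = (Mb.ract l p.1 q.2 + Mb.lact l p.2 q.1 + chi l p.2 q.2, SB.mul l p.2 q.2)) :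
    (∀ f : B →ₗ[k] A, (∀ b : B, ((f b, (0 : B)) : A × B) = 0) → f = 0) ∧
    (∀ dE : (A × B) →ₗ[k] (A × B), IsConfDer S dE →
      (∀ a : A, (dE (a, (0 : B))).2 = 0) →
      (((∀ a : A, dE (a, (0 : B)) = 0) ∧ ∀ b : B, (dE ((0 : A), b)).2 = 0) ↔
        ∃ f : B →ₗ[k] A, (∀ b, f (SB.D b) = Mb.DM (f b)) ∧
          (∀ (l : k) (b1 b2 : B),
            f (SB.mul l b1 b2) = Mb.lact l b1 (f b2) + Mb.ract l (f b1) b2) ∧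
          ∀ p : A × B, dE p = (f p.2, 0))) ∧
    (∀ (dA : A →ₗ[k] A) (dB : B →ₗ[k] B),
      (∀ a, dA (Mb.DM a) = Mb.DM (dA a)) →
      ((∀ b, dB (SB.D b) = SB.D (dB b)) ∧
       ∀ (l : k) (b1 b2 : B),
         dB (SB.mul l b1 b2) = SB.mul l (dB b1) b2 + SB.mul l b1 (dB b2)) →
      ((∃ dE : (A × B) →ₗ[k] (A × B), IsConfDer S dE ∧
          (∀ a : A, dE (a, (0 : B))= ((dA a : A), (0 : B))) ∧
          ∀ b : B, (dE ((0 : A), b)).2 = dB b) ↔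
        ((∀ (l : k) (b : B) (a : A),
            dA (Mb.lact l b a) = Mb.lact l b (dA a) + Mb.lact l (dB b) a) ∧
         (∀ (l : k) (a : A) (b : B),
            dA (Mb.ract l a b) = Mb.ract l a (dB b) + Mb.ract l (dA a) b) ∧
         ∃ f : B →ₗ[k] A, (∀ b, f (SB.D b) = Mb.DM (f b)) ∧
           ∀ (l : k) (b1 b2 : B),
             dA (chi l b1 b2) - chi l (dB b1) b2 - chi l b1 (dB b2)
               = Mb.lact l b1 (f b2) - f (SB.mul l b1 b2) + Mb.ract l (f b1) b2))) :=
  stmt_19_general k A B SB Mb chi S hSD hSm
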